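/- For every N ≥ 0, there exists an optimal palindromic decomposition of the prefix of the Thue-Morse word of length 4N + 2 that does not end with a palindrome of length 3: the prefix of t of length 4N+2 equals some concatenation p_1⋯p_k of nonempty palindromes with k = PPL_t(4N+2) and the length of p_k different from 3. -/

import Mathlib

/-- The Thue–Morse word: `tm n` is the number of ones (sum of binary digits)
in the binary expansion of `n`, taken mod 2. -/
def tm (n : ℕ) : ℕ := (Nat.digits 2 n).sum % 2

/-- `ps` is a factorization of the finite word `w` into nonempty palindromes. -/
def IsPalDecomp (w : List ℕ) (ps : List (List ℕ)) : Prop :=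
  ps.flatten = w ∧ ∀ p ∈ ps, p ≠ [] ∧ p.Palindrome

/-- The palindromic length of a finite word: the least number of nonempty
palindromes whose concatenation is the word (0 for the empty word). -/
noncomputable def palLen (w : List ℕ) : ℕ :=
  sInf {k | ∃ ps, ps.length = k ∧ IsPalDecomp w ps}

/-- `pplTM n` is the palindromic length of the prefix of length `n`
of the Thue–Morse word. -/
noncomputable def pplTM (n : ℕ) : ℕ := palLen ((List.range n).map tm)

/-!
Odd palindromes in `t` have length 1 or 3, and an even palindrome `t[i, m)` has `4 ∣ i + m`;
undoing the morphism twice turns it into a palindrome `t[⌈i/4⌉, ⌊m/4⌋)`. Peeling the last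
palindrome off an optimal decomposition, this gives by strong induction
`PPL(4n) ≥ PPL(n)`, `PPL(4n+1) ≥ PPL(n) + 1`, `PPL(4n+2) ≥ min (PPL n) (PPL (n+1)) + 2` and
`PPL(4n+3) ≥ PPL(n+1) + 1`. If an optimal decomposition of the prefix of length `4N+2` ended in
a palindrome of length 3, then `PPL(4N+2) = PPL(4N-1) + 1 ≥ PPL(N) + 2 ≥ PPL(4N+1) + 1`, because
the morphism gives `PPL(4N+1) ≤ PPL(4N) + 1 ≤ PPL(N) + 1`. So an optimal decomposition of the
prefix of length `4N+1` followed by the letter `t(4N+1)` is optimal as well.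
-/

lemma IsPalDecomp.append {u v : List ℕ} {ps qs : List (List ℕ)} (hu : IsPalDecomp u ps)
    (hv : IsPalDecomp v qs) : IsPalDecomp (u ++ v) (ps ++ qs) :=
  ⟨by rw [List.flatten_append, hu.1, hv.1],
    fun p hp => (List.mem_append.mp hp).elim (hu.2 p) (hv.2 p)⟩

lemma isPalDecomp_singleton {v : List ℕ} (hne : v ≠ []) (hv : v.Palindrome) :
    IsPalDecomp v [v] :=
  ⟨by simp, by simpa using ⟨hne, hv⟩⟩

lemma palLen_le {w : List ℕ} {ps : List (List ℕ)} (h : IsPalDecomp w ps) :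
    palLen w ≤ ps.length :=
  Nat.sInf_le ⟨ps, rfl, h⟩

lemma exists_isPalDecomp_length_eq_palLen (w : List ℕ) :
    ∃ ps, IsPalDecomp w ps ∧ ps.length = palLen w := by
  have hsingletons : IsPalDecomp w (w.map ([·])) :=
    ⟨by simp [← List.flatMap_def], by simp [List.Palindrome.singleton]⟩
  obtain ⟨ps, hl, hd⟩ :=
    Nat.sInf_mem (s := {k | ∃ ps, ps.length = k ∧ IsPalDecomp w ps}) ⟨_, _, rfl, hsingletons⟩
  exact ⟨ps, hd, hl⟩

lemma palLen_append_le {u v : List ℕ} (hv : v.Palindrome) : palLen (u ++ v) ≤ palLen u + 1 := by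
  rcases eq_or_ne v [] with rfl | hne
  · simp
  obtain ⟨ps, hd, hl⟩ := exists_isPalDecomp_length_eq_palLen u
  simpa [hl] using palLen_le (hd.append (isPalDecomp_singleton hne hv))

lemma IsPalDecomp.palLen_add_one {u v : List ℕ} {ps : List (List ℕ)}
    (hd : IsPalDecomp (u ++ v) (ps ++ [v])) (hopt : (ps ++ [v]).length = palLen (u ++ v)) :
    palLen u + 1 = palLen (u ++ v) := by
  have hu : IsPalDecomp u ps :=
    ⟨by simpa using hd.1, fun p hp => hd.2 p (by simp [hp])⟩
  have := palLen_le hu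
  have := palLen_append_le (u := u) (hd.2 v (by simp)).2
  simp only [List.length_append, List.length_singleton] at hopt
  omega

lemma List.Palindrome.flatMap {α β : Type*} {f : α → List β} (hf : ∀ a, (f a).Palindrome)
    {l : List α} (hl : l.Palindrome) : (l.flatMap f).Palindrome :=
  .of_reverse_eq <| by
    simp [List.reverse_flatMap, hl.reverse_eq, Function.comp_def, (hf _).reverse_eq]

lemma palLen_flatMap_le {f : ℕ → List ℕ} (hf : ∀ c, f c ≠ [] ∧ (f c).Palindrome) (w : List ℕ) :
    palLen (w.flatMap f) ≤ palLen w := by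
  obtain ⟨ps, hd, hl⟩ := exists_isPalDecomp_length_eq_palLen w
  have hd' : IsPalDecomp (w.flatMap f) (ps.map (·.flatMap f)) := by
    refine ⟨by simp [← hd.1, List.flatMap_def, List.flatten_flatten, Function.comp_def], ?_⟩
    simp only [List.mem_map, forall_exists_index, and_imp, forall_apply_eq_imp_iff₂]
    intro p hp
    refine ⟨?_, (hd.2 p hp).2.flatMap fun c => (hf c).2⟩
    obtain ⟨c, hc⟩ := List.exists_mem_of_ne_nil p (hd.2 p hp).1
    simpa [List.flatMap_eq_nil_iff] using ⟨c, hc, (hf c).1⟩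
  simpa [hl] using palLen_le hd'

lemma tm_le_one (n : ℕ) : tm n ≤ 1 := Nat.le_of_lt_succ (Nat.mod_lt _ two_pos)

lemma tm_two_mul (k : ℕ) : tm (2 * k) = tm k := by
  rcases Nat.eq_zero_or_pos k with rfl | hk
  · rfl
  · unfold tm
    rw [Nat.digits_def' one_lt_two (by omega)]
    simp [Nat.mul_mod_right, Nat.mul_div_cancel_left _ two_pos]

lemma tm_two_mul_add_one (k : ℕ) : tm (2 * k + 1) + tm k = 1 := by
  unfold tm
  rw [Nat.digits_def' one_lt_two (by omega), show (2 * k + 1) % 2 = 1 by omega,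
    show (2 * k + 1) / 2 = k by omega, List.sum_cons]
  omega

lemma tm_four_mul (k : ℕ) : tm (4 * k) = tm k := by
  rw [show 4 * k = 2 * (2 * k) by ring, tm_two_mul, tm_two_mul]

lemma tm_four_mul_add_one (k : ℕ) : tm (4 * k + 1) + tm k = 1 := by
  rw [show 4 * k + 1 = 2 * (2 * k) + 1 by ring, ← tm_two_mul k]
  exact tm_two_mul_add_one (2 * k)

lemma tm_four_mul_add_two (k : ℕ) : tm (4 * k + 2) + tm k = 1 := by
  rw [show 4 * k + 2 = 2 * (2 * k + 1) by ring, tm_two_mul]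
  exact tm_two_mul_add_one k

lemma tm_four_mul_add_three (k : ℕ) : tm (4 * k + 3) = tm k := by
  have h₁ := tm_two_mul_add_one (2 * k + 1)
  have h₂ := tm_two_mul_add_one k
  rw [show 2 * (2 * k + 1) + 1 = 4 * k + 3 by ring] at h₁
  omega

lemma not_tm_three_equal (e : ℕ) : ¬ (tm e = tm (e + 1) ∧ tm (e + 1) = tm (e + 2)) := by
  rintro ⟨h₁, h₂⟩
  obtain ⟨f, rfl | rfl⟩ : ∃ f, e = 2 * f ∨ e = 2 * f + 1 := ⟨e / 2, by omega⟩
  · have := tm_two_mul f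
    have := tm_two_mul_add_one f
    omega
  · rw [show 2 * f + 1 + 1 = 2 * (f + 1) by ring, show 2 * f + 1 + 2 = 2 * (f + 1) + 1 by ring,
      tm_two_mul] at h₂
    have := tm_two_mul_add_one (f + 1)
    omega

/-- The factor `t(i) ⋯ t(m-1)` is a palindrome; `a` and `b` range over mirror positions. -/
def IsTMPal (i m : ℕ) : Prop :=
  ∀ a b, i ≤ a → i ≤ b → a + b + 1 = i + m → tm a = tm b

def IsTMAntipal (i m : ℕ) : Prop :=
  ∀ a b, i ≤ a → i ≤ b → a + b + 1 = i + m → tm a + tm b = 1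

lemma isTMPal_of_le_succ {i m : ℕ} (h : m ≤ i + 1) : IsTMPal i m :=
  fun a b _ _ hab => by rw [show a = b by omega]

namespace IsTMPal

variable {i m : ℕ}

lemma shrink {j k : ℕ} (h : IsTMPal i m) (hj : i ≤ j) (hk : j + k = i + m) : IsTMPal j k :=
  fun a b ha hb hab => h a b (by omega) (by omega) (by omega)

lemma extend (h : IsTMPal (i + 1) m) (he : tm i = tm m) : IsTMPal i (m + 1) := by
  intro a b ha hb hab
  rcases ha.eq_or_lt with rfl | ha
  · rwa [show b = m by omega]
  rcases hb.eq_or_lt with rfl | hb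
  · rw [show a = m by omega, he]
  exact h a b ha hb (by omega)

lemma odd_of_length_two (h : IsTMPal i (i + 2)) : i % 2 = 1 := by
  by_contra hi
  obtain ⟨k, rfl⟩ : ∃ k, i = 2 * k := ⟨i / 2, by omega⟩
  have := h (2 * k) (2 * k + 1) le_rfl (by omega) (by omega)
  have := tm_two_mul k
  have := tm_two_mul_add_one k
  omega

lemma mod_four_of_length_three (h : IsTMPal i (i + 3)) : i % 4 = 2 ∨ i % 4 = 3 := by
  by_contra hi
  obtain ⟨k, rfl | rfl⟩ : ∃ k, i = 4 * k ∨ i = 4 * k + 1 := ⟨i / 4, by omega⟩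
  · have := h (4 * k) (4 * k + 2) le_rfl (by omega) (by omega)
    have := tm_four_mul k
    have := tm_four_mul_add_two k
    omega
  · have := h (4 * k + 1) (4 * k + 3) le_rfl (by omega) (by omega)
    have := tm_four_mul_add_one k
    have := tm_four_mul_add_three k
    omega

lemma not_length_five (h : IsTMPal i (i + 5)) : False := by
  obtain ⟨e, rfl | rfl⟩ : ∃ e, i = 2 * e ∨ i = 2 * e + 1 := ⟨i / 2, by omega⟩
  · have := h (2 * e) (2 * (e + 2)) le_rfl (by omega) (by omega)
    have := h (2 * e + 1) (2 * (e + 1) + 1) (by omega) (by omega) (by omega)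
    have := tm_two_mul e
    have := tm_two_mul (e + 2)
    have := tm_two_mul_add_one e
    have := tm_two_mul_add_one (e + 1)
    have := not_tm_three_equal e
    omega
  · have := h (2 * e + 1) (2 * (e + 2) + 1) le_rfl (by omega) (by omega)
    have := h (2 * (e + 1)) (2 * (e + 2)) (by omega) (by omega) (by omega)
    have := tm_two_mul (e + 1)
    have := tm_two_mul (e + 2)
    have := tm_two_mul_add_one e
    have := tm_two_mul_add_one (e + 2)
    have := not_tm_three_equal e
    omega

/-- Shrink to the central factor of length 2 or 5. -/
lemma eq_succ_or_eq_add_three_or_four_dvd (h : IsTMPal i m) (hi : i < m) :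
    i + 1 = m ∨ (i + 3 = m ∧ (i % 4 = 2 ∨ i % 4 = 3)) ∨ 4 ∣ i + m := by
  obtain ⟨c, hc | hc⟩ : ∃ c, i + m = 2 * c ∨ i + m = 2 * c + 1 := ⟨(i + m) / 2, by omega⟩
  · have := (h.shrink (j := c - 1) (k := c - 1 + 2) (by omega) (by omega)).odd_of_length_two
    omega
  · rcases (by omega : i + 1 = m ∨ i + 3 = m ∨ i + 5 ≤ m) with h₁ | h₃ | h₅
    · exact Or.inl h₁
    · subst h₃
      exact Or.inr (Or.inl ⟨rfl, h.mod_four_of_length_three⟩)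
    · exact (h.shrink (j := c - 2) (k := c - 2 + 5) (by omega) (by omega)).not_length_five.elim

lemma half (h : IsTMPal i m) (hp : i % 2 = m % 2) : IsTMAntipal ((i + 1) / 2) (m / 2) := by
  intro a b ha hb hab
  have hab' := h (2 * a) (2 * b + 1) (by omega) (by omega) (by omega)
  rw [tm_two_mul] at hab'
  have := tm_two_mul_add_one b
  omega

end IsTMPal

namespace IsTMAntipal

variable {i m : ℕ}

lemma mod_two_eq (h : IsTMAntipal i m) (hi : i ≤ m) : i % 2 = m % 2 := by
  by_contra hp
  have := h ((i + m) / 2) ((i + m) / 2) (by omega) (by omega) (by omega)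
  omega

lemma half (h : IsTMAntipal i m) (hp : i % 2 = m % 2) : IsTMPal ((i + 1) / 2) (m / 2) := by
  intro a b ha hb hab
  have hab' := h (2 * a) (2 * b + 1) (by omega) (by omega) (by omega)
  rw [tm_two_mul] at hab'
  have := tm_two_mul_add_one b
  have := tm_le_one a
  have := tm_le_one b
  omega

end IsTMAntipal

lemma IsTMPal.quarter {i m : ℕ} (h : IsTMPal i m) (hp : i % 2 = m % 2) :
    IsTMPal ((i + 3) / 4) (m / 4) := by
  have ha := h.half hp
  by_cases hle : (i + 1) / 2 ≤ m / 2
  · have := ha.half (ha.mod_two_eq hle)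
    rwa [show ((i + 1) / 2 + 1) / 2 = (i + 3) / 4 by omega, show m / 2 / 2 = m / 4 by omega] at this
  · exact isTMPal_of_le_succ (by omega)

def tmPrefix (n : ℕ) : List ℕ := (List.range n).map tm

@[simp] lemma length_tmPrefix (n : ℕ) : (tmPrefix n).length = n := by simp [tmPrefix]

lemma tmPrefix_succ (n : ℕ) : tmPrefix (n + 1) = tmPrefix n ++ [tm n] := by
  simp [tmPrefix, List.range_succ]

lemma tmPrefix_take {i m : ℕ} (h : i ≤ m) : (tmPrefix m).take i = tmPrefix i := by
  simp [tmPrefix, ← List.map_take, Nat.min_eq_left h]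

lemma isTMPal_iff_palindrome_drop {i m : ℕ} (hi : i ≤ m) :
    IsTMPal i m ↔ ((tmPrefix m).drop i).Palindrome := by
  rw [List.Palindrome.iff_reverse_eq]
  constructor
  · intro h
    refine List.ext_getElem (by simp) fun k h₁ h₂ => ?_
    simp only [List.length_reverse, List.length_drop, length_tmPrefix] at h₁
    simp only [List.getElem_reverse, List.getElem_drop, tmPrefix, List.getElem_map,
      List.getElem_range, List.length_drop, List.length_map, List.length_range]
    exact h _ _ (by omega) (by omega) (by omega)
  · intro h a b ha hb hab
    have := List.getElem_of_eq h (i := b - i) (by simp; omega)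
    simp only [List.getElem_reverse, List.getElem_drop, tmPrefix, List.getElem_map,
      List.getElem_range, List.length_drop, List.length_map, List.length_range] at this
    rwa [show i + (m - i - 1 - (b - i)) = a by omega, show i + (b - i) = b by omega] at this

lemma tmPrefix_eq_append_of_isPalDecomp {m : ℕ} {ps : List (List ℕ)} {p : List ℕ}
    (hd : IsPalDecomp (tmPrefix m) (ps ++ [p])) : tmPrefix m = tmPrefix (m - p.length) ++ p := by
  have h : ps.flatten ++ p = tmPrefix m := by simpa using hd.1
  have hlen : ps.flatten.length + p.length = m := by simpa using congrArg List.length h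
  calc tmPrefix m = ps.flatten ++ p := h.symm
    _ = tmPrefix (m - p.length) ++ p := by
      rw [← tmPrefix_take (show m - p.length ≤ m by omega), ← h, List.take_left' (by omega)]

lemma pplTM_sub_length_add_one {m : ℕ} {ps : List (List ℕ)} {p : List ℕ}
    (hd : IsPalDecomp (tmPrefix m) (ps ++ [p])) (hopt : (ps ++ [p]).length = pplTM m) :
    pplTM (m - p.length) + 1 = pplTM m := by
  have e := tmPrefix_eq_append_of_isPalDecomp hd
  change palLen _ + 1 = palLen (tmPrefix m)
  rw [e] at hd ⊢
  exact hd.palLen_add_one (by rwa [← e])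

lemma exists_isTMPal_pplTM_add_one {m : ℕ} (hm : 0 < m) :
    ∃ i < m, IsTMPal i m ∧ pplTM i + 1 = pplTM m := by
  obtain ⟨ps, hd, hopt⟩ := exists_isPalDecomp_length_eq_palLen (tmPrefix m)
  obtain ⟨ps, p, rfl⟩ : ∃ ps' p, ps = ps' ++ [p] := by
    rcases ps.eq_nil_or_concat with rfl | ⟨ps', p, rfl⟩
    · have := congrArg List.length hd.1
      simp only [List.flatten_nil, List.length_nil, length_tmPrefix] at this
      omega
    · exact ⟨ps', p, List.concat_eq_append ..⟩
  have hp := hd.2 p (by simp)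
  have e := tmPrefix_eq_append_of_isPalDecomp hd
  have hlen : p.length ≤ m := by
    have := congrArg List.length e
    simp only [List.length_append, length_tmPrefix] at this
    omega
  have hpos : 0 < p.length := List.length_pos_iff.mpr hp.1
  refine ⟨m - p.length, by omega, ?_, pplTM_sub_length_add_one hd hopt⟩
  rw [isTMPal_iff_palindrome_drop (by omega), e, List.drop_left' (length_tmPrefix _)]
  exact hp.2

lemma pplTM_le_of_isTMPal {s n : ℕ} (h : IsTMPal s n) (hs : s ≤ n) :
    pplTM n ≤ pplTM s + 1 := by
  have := palLen_append_le (u := (tmPrefix n).take s) ((isTMPal_iff_palindrome_drop hs).mp h)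
  rwa [List.take_append_drop, tmPrefix_take hs] at this

lemma pplTM_succ_le (n : ℕ) : pplTM (n + 1) ≤ pplTM n + 1 :=
  pplTM_le_of_isTMPal (isTMPal_of_le_succ le_rfl) n.le_succ

def tmMorphism (c : ℕ) : List ℕ := [c, 1 - c, 1 - c, c]

lemma tmMorphism_tm (n : ℕ) :
    tmMorphism (tm n) = [tm (4 * n), tm (4 * n + 1), tm (4 * n + 2), tm (4 * n + 3)] := by
  have h₁ := tm_four_mul_add_one n
  have h₂ := tm_four_mul_add_two n
  simp only [tmMorphism, tm_four_mul, tm_four_mul_add_three, List.cons.injEq, and_true, true_and]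
  omega

lemma tmPrefix_four_mul (n : ℕ) : tmPrefix (4 * n) = (tmPrefix n).flatMap tmMorphism := by
  induction n with
  | zero => rfl
  | succ n ih =>
    rw [show 4 * (n + 1) = 4 * n + 1 + 1 + 1 + 1 by ring]
    simp only [tmPrefix_succ, ih, List.flatMap_append, List.flatMap_singleton, tmMorphism_tm,
      List.append_assoc, List.cons_append, List.nil_append, show 4 * n + 1 + 1 = 4 * n + 2 by ring,
      show 4 * n + 2 + 1 = 4 * n + 3 by ring]

lemma pplTM_four_mul_le (n : ℕ) : pplTM (4 * n) ≤ pplTM n := by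
  have hφ : ∀ c, tmMorphism c ≠ [] ∧ (tmMorphism c).Palindrome :=
    fun c => ⟨by simp [tmMorphism], .of_reverse_eq (by simp [tmMorphism])⟩
  have := palLen_flatMap_le hφ (tmPrefix n)
  rwa [← tmPrefix_four_mul] at this

lemma pplTM_four_mul_add_one_le (n : ℕ) : pplTM (4 * n + 1) ≤ pplTM n + 1 :=
  (pplTM_succ_le _).trans (Nat.add_le_add_right (pplTM_four_mul_le n) 1)

noncomputable def tmLowerBound (m : ℕ) : ℕ :=
  match m % 4 with
  | 0 => pplTM (m / 4)
  | 1 => pplTM (m / 4) + 1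
  | 2 => min (pplTM (m / 4)) (pplTM (m / 4 + 1)) + 2
  | _ => pplTM (m / 4 + 1) + 1

lemma tmLowerBound_four_mul (n : ℕ) : tmLowerBound (4 * n) = pplTM n := by
  simp only [tmLowerBound, show 4 * n % 4 = 0 by omega, show 4 * n / 4 = n by omega]

lemma tmLowerBound_four_mul_add_one (n : ℕ) : tmLowerBound (4 * n + 1) = pplTM n + 1 := by
  simp only [tmLowerBound, show (4 * n + 1) % 4 = 1 by omega, show (4 * n + 1) / 4 = n by omega]

lemma tmLowerBound_four_mul_add_two (n : ℕ) :
    tmLowerBound (4 * n + 2) = min (pplTM n) (pplTM (n + 1)) + 2 := by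
  simp only [tmLowerBound, show (4 * n + 2) % 4 = 2 by omega, show (4 * n + 2) / 4 = n by omega]

lemma tmLowerBound_four_mul_add_three (n : ℕ) :
    tmLowerBound (4 * n + 3) = pplTM (n + 1) + 1 := by
  simp only [tmLowerBound, show (4 * n + 3) % 4 = 3 by omega, show (4 * n + 3) / 4 = n by omega]

lemma tmLowerBound_succ_le (i : ℕ) : tmLowerBound (i + 1) ≤ tmLowerBound i + 1 := by
  obtain ⟨n, rfl | rfl | rfl | rfl⟩ :
      ∃ n, i = 4 * n ∨ i = 4 * n + 1 ∨ i = 4 * n + 2 ∨ i = 4 * n + 3 := ⟨i / 4, by omega⟩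
  · simp only [tmLowerBound_four_mul, tmLowerBound_four_mul_add_one, le_refl]
  · rw [show 4 * n + 1 + 1 = 4 * n + 2 by ring, tmLowerBound_four_mul_add_two,
      tmLowerBound_four_mul_add_one]
    omega
  · rw [tmLowerBound_four_mul_add_two, tmLowerBound_four_mul_add_three]
    have := pplTM_succ_le n
    omega
  · rw [show 4 * n + 3 + 1 = 4 * (n + 1) by ring, tmLowerBound_four_mul,
      tmLowerBound_four_mul_add_three]
    omega

lemma tmLowerBound_add_three_le {i : ℕ} (hi : i % 4 = 2 ∨ i % 4 = 3) :
    tmLowerBound (i + 3) ≤ tmLowerBound i + 1 := by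
  obtain ⟨n, rfl | rfl⟩ : ∃ n, i = 4 * n + 2 ∨ i = 4 * n + 3 := ⟨i / 4, by omega⟩
  · rw [show 4 * n + 2 + 3 = 4 * (n + 1) + 1 by ring, tmLowerBound_four_mul_add_one,
      tmLowerBound_four_mul_add_two]
    have := pplTM_succ_le n
    omega
  · rw [show 4 * n + 3 + 3 = 4 * (n + 1) + 2 by ring, tmLowerBound_four_mul_add_two,
      tmLowerBound_four_mul_add_three]
    omega

/-- For `m ≡ 2, 3 (mod 4)` the letters just outside the quartered palindrome agree, because the
outer letters `t(i) = t(m-1)` have residues 1 or 2 mod 4, where the morphism flips the letter. -/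
lemma IsTMPal.tmLowerBound_le_of_four_dvd {i m : ℕ} (h : IsTMPal i m) (hi : i < m)
    (h4 : 4 ∣ i + m) : tmLowerBound m ≤ tmLowerBound i + 1 := by
  have hq := h.quarter (by omega)
  obtain ⟨n, rfl | rfl | rfl | rfl⟩ :
      ∃ n, m = 4 * n ∨ m = 4 * n + 1 ∨ m = 4 * n + 2 ∨ m = 4 * n + 3 := ⟨m / 4, by omega⟩
  · obtain ⟨s, rfl⟩ : ∃ s, i = 4 * s := ⟨i / 4, by omega⟩
    rw [show (4 * s + 3) / 4 = s by omega, show 4 * n / 4 = n by omega] at hq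
    rw [tmLowerBound_four_mul, tmLowerBound_four_mul]
    exact pplTM_le_of_isTMPal hq (by omega)
  · obtain ⟨s, rfl⟩ : ∃ s, i = 4 * s + 3 := ⟨i / 4, by omega⟩
    rw [show (4 * s + 3 + 3) / 4 = s + 1 by omega, show (4 * n + 1) / 4 = n by omega] at hq
    rw [tmLowerBound_four_mul_add_one, tmLowerBound_four_mul_add_three]
    have := pplTM_le_of_isTMPal hq (by omega)
    omega
  · obtain ⟨s, rfl⟩ : ∃ s, i = 4 * s + 2 := ⟨i / 4, by omega⟩
    rw [show (4 * s + 2 + 3) / 4 = s + 1 by omega, show (4 * n + 2) / 4 = n by omega] at hq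
    have hend := h (4 * s + 2) (4 * n + 1) le_rfl (by omega) (by omega)
    have := tm_four_mul_add_two s
    have := tm_four_mul_add_one n
    have hq' := hq.extend (by omega)
    rw [tmLowerBound_four_mul_add_two, tmLowerBound_four_mul_add_two]
    have := pplTM_le_of_isTMPal hq (by omega)
    have := pplTM_le_of_isTMPal hq' (by omega)
    omega
  · obtain ⟨s, rfl⟩ : ∃ s, i = 4 * s + 1 := ⟨i / 4, by omega⟩
    rw [show (4 * s + 1 + 3) / 4 = s + 1 by omega, show (4 * n + 3) / 4 = n by omega] at hq
    have hend := h (4 * s + 1) (4 * n + 2) le_rfl (by omega) (by omega)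
    have := tm_four_mul_add_one s
    have := tm_four_mul_add_two n
    have hq' := hq.extend (by omega)
    rw [tmLowerBound_four_mul_add_three, tmLowerBound_four_mul_add_one]
    have := pplTM_le_of_isTMPal hq' (by omega)
    omega

lemma IsTMPal.tmLowerBound_le {i m : ℕ} (h : IsTMPal i m) (hi : i < m) :
    tmLowerBound m ≤ tmLowerBound i + 1 := by
  rcases h.eq_succ_or_eq_add_three_or_four_dvd hi with rfl | ⟨rfl, hr⟩ | h4
  · exact tmLowerBound_succ_le i
  · exact tmLowerBound_add_three_le hr
  · exact h.tmLowerBound_le_of_four_dvd hi h4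

theorem tmLowerBound_le_pplTM (m : ℕ) : tmLowerBound m ≤ pplTM m := by
  induction m using Nat.strong_induction_on with
  | _ m ih =>
    rcases Nat.eq_zero_or_pos m with rfl | hm
    · exact (tmLowerBound_four_mul 0).le
    obtain ⟨i, hi, h, hP⟩ := exists_isTMPal_pplTM_add_one hm
    calc tmLowerBound m ≤ tmLowerBound i + 1 := h.tmLowerBound_le hi
      _ ≤ pplTM i + 1 := Nat.add_le_add_right (ih i hi) 1
      _ = pplTM m := hP

lemma pplTM_four_mul_add_two_eq {N : ℕ} {ps : List (List ℕ)} {p : List ℕ}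
    (hd : IsPalDecomp (tmPrefix (4 * N + 2)) (ps ++ [p]))
    (hopt : (ps ++ [p]).length = pplTM (4 * N + 2)) (h3 : p.length = 3) :
    pplTM (4 * N + 2) = pplTM (4 * N + 1) + 1 := by
  have hlast := pplTM_sub_length_add_one hd hopt
  have hlen := congrArg List.length (tmPrefix_eq_append_of_isPalDecomp hd)
  simp only [List.length_append, length_tmPrefix, h3] at hlast hlen
  obtain ⟨n, rfl⟩ : ∃ n, N = n + 1 := ⟨N - 1, by omega⟩
  rw [show 4 * (n + 1) + 2 - 3 = 4 * n + 3 by omega] at hlast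
  have hlb := tmLowerBound_le_pplTM (4 * n + 3)
  rw [tmLowerBound_four_mul_add_three] at hlb
  have := pplTM_four_mul_add_one_le (n + 1)
  have := pplTM_succ_le (4 * (n + 1) + 1)
  rw [show 4 * (n + 1) + 1 + 1 = 4 * (n + 1) + 2 by ring] at this
  omega

lemma exists_isPalDecomp_getLast?_eq_singleton {m : ℕ} (h : pplTM (m + 1) = pplTM m + 1) :
    ∃ ps, IsPalDecomp (tmPrefix (m + 1)) ps ∧ ps.length = pplTM (m + 1) ∧
      ps.getLast? = some [tm m] := by
  obtain ⟨ps, hd, hl⟩ := exists_isPalDecomp_length_eq_palLen (tmPrefix m)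
  refine ⟨ps ++ [[tm m]], ?_, ?_, by simp⟩
  · rw [tmPrefix_succ]
    exact hd.append (isPalDecomp_singleton (by simp) (List.Palindrome.singleton _))
  · simp only [List.length_append, List.length_singleton, hl, h]
    rfl

/-- There exists an optimal palindromic decomposition of the prefix of the
Thue–Morse word of length `4N + 2` that does not end with a palindrome of
length 3. -/
theorem pplTM_4N2_exists_no_length_three_end (N : ℕ) :
    ∃ ps : List (List ℕ),
      IsPalDecomp ((List.range (4 * N + 2)).map tm) ps ∧
      ps.length = pplTM (4 * N + 2) ∧
      ∀ p, ps.getLast? = some p → p.length ≠ 3 := by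
  obtain ⟨ps, hd, hopt⟩ := exists_isPalDecomp_length_eq_palLen (tmPrefix (4 * N + 2))
  by_cases hlast : ∀ p, ps.getLast? = some p → p.length ≠ 3
  · exact ⟨ps, hd, hopt, hlast⟩
  push Not at hlast
  obtain ⟨p, hp, h3⟩ := hlast
  obtain ⟨ps, rfl⟩ := List.getLast?_eq_some_iff.mp hp
  obtain ⟨qs, hqd, hql, hqlast⟩ :=
    exists_isPalDecomp_getLast?_eq_singleton (pplTM_four_mul_add_two_eq hd hopt h3)
  exact ⟨qs, hqd, hql, by simp [hqlast]⟩
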